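/- arXiv:1906.06957 — 7 statements merged into one kernel-verified Lean document; each statement's English description precedes it below -/
import Mathlib

section
/- Let 𝕋 = ℝ or ℤ, ν a Borel measure on 𝕋, H_in and H_ob complex Hilbert spaces, k a bounded continuous positive definite kernel on a topological space 𝒳, and (Ω,P) a probability space with a group Θ = {θ_t}_{t∈𝕋} of measure-preserving measurable bijections. For m ∈ ℕ and triples D_i = (L_i, Φ_i, I_i) ∈ 𝒯_k(H_in, H_ob; ν) (i = 1,2), define 𝒦_k^{(m)}(D_1, D_2) := ⋀^m ∫_𝕋 (L_2 K_{Φ_2}^t I_2)^* L_1 K_{Φ_1}^t I_1 dν(t) (a Hilbert–Schmidt operator on ⋀^m H_in). Then 𝒦_k^{(m)} is a B(⋀^m H_in)-valued positive definite kernel on 𝒯_k(H_in, H_ob; ν): 𝒦_k^{(m)}(D_1, D_2) = 𝒦_k^{(m)}(D_2, D_1)^* for all D_1, D_2, and for every finite family D_1,…,D_r ∈ 𝒯_k(H_in, H_ob; ν) and v_1,…,v_r ∈ ⋀^m H_in, ∑_{i,j=1}^r ⟨𝒦_k^{(m)}(D_i, D_j) v_i, v_j⟩_{⋀^m H_in}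 ≥ 0. -/
open MeasureTheory
open scoped ComplexOrder BigOperators

noncomputable section

local notation "⟪" x ", " y "⟫" => @inner ℂ _ _ x y

/-- A (ℂ-valued) positive definite kernel on a set. -/
def IsPosDefKernel {𝒳 : Type*} (k : 𝒳 → 𝒳 → ℂ) : Prop :=
  (∀ x y, k x y = (starRingEnd ℂ) (k y x)) ∧
  ∀ (n : ℕ) (x : Fin n → 𝒳) (c : Fin n → ℂ),
    0 ≤ ∑ i, ∑ j, c i * (starRingEnd ℂ) (c j) * k (x i) (x j)

/-- A linear map between inner product spaces is Hilbert–Schmidt if the sums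
`∑ ‖A e_i‖²` over finite orthonormal families are uniformly bounded. -/
def IsHilbertSchmidt {E F : Type*} [NormedAddCommGroup E] [InnerProductSpace ℂ E]
    [NormedAddCommGroup F] [InnerProductSpace ℂ F] (A : E →ₗ[ℂ] F) : Prop :=
  ∃ C : ℝ, ∀ (n : ℕ) (e : Fin n → E), Orthonormal ℂ e → ∑ i, ‖A (e i)‖ ^ 2 ≤ C

/-- A triple `D = (L, Φ, I) ∈ 𝒯_k(H_in, H_ob; ν)`: a random dynamical system `Φ` on
some `ℳ ⊂ 𝒳` with respect to `θ`, together with its (well-defined)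
Perron–Frobenius operators `K_Φ^t` on the vvRKHS (`K_Φ^t 𝐤_{𝛗(s,x)} h =
𝐤_{𝛗(t+s,x)} h`), an initial value operator `I : H_in → H_{𝐤,Φ}` and an observable
operator `L` (defined on `H_{𝐤,Φ}`, here extended to all of `H_𝐤`), such that
`L K_Φ^t I` is Hilbert–Schmidt for all `t` and `t ↦ ‖L K_Φ^t I v‖ ∈ L²(𝕋,ν)`. -/
structure RDSTriple {𝕋 Ω 𝒳 HK : Type*} [AddCommGroup 𝕋] [MeasurableSpace 𝕋]
    [MeasurableSpace Ω] [TopologicalSpace 𝒳] [MeasurableSpace 𝒳]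
    [NormedAddCommGroup HK] [InnerProductSpace ℂ HK]
    {P : Measure Ω} (θ : 𝕋 → Ω → Ω)
    (feat : (Ω → 𝒳) → Lp ℂ 2 P → HK)
    (Hin Hob : Type*) [NormedAddCommGroup Hin] [InnerProductSpace ℂ Hin]
    [NormedAddCommGroup Hob] [InnerProductSpace ℂ Hob]
    (ν : Measure 𝕋) where
  /-- the domain `ℳ ⊂ 𝒳` of the random dynamical system -/
  M : Set 𝒳
  /-- the random dynamical system -/
  Φ : 𝕋 → Ω → 𝒳 → 𝒳
  maps_mem : ∀ t ω x, x ∈ M → Φ t ω x ∈ M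
  measurable : Measurable fun p : 𝕋 × Ω × M => Φ p.1 p.2.1 (p.2.2 : 𝒳)
  init : ∀ ω x, x ∈ M → Φ 0 ω x = x
  cocycle : ∀ t s ω x, x ∈ M → Φ (t + s) ω x = Φ t (θ s ω) (Φ s ω x)
  /-- the Perron–Frobenius operators `K_Φ^t` of `Φ`, assumed well defined -/
  K : 𝕋 → HK →ₗ[ℂ] HK
  hK : ∀ (t s : 𝕋) (x : 𝒳), x ∈ M → ∀ h : Lp ℂ 2 P,
    K t (feat (fun ω => Φ s (θ (-s) ω) x) h)
      = feat (fun ω => Φ (t + s) (θ (-(t + s)) ω) x) h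
  /-- the initial value operator, with values in `H_{𝐤,Φ}` -/
  I : Hin →ₗ[ℂ] HK
  hI : ∀ v, I v ∈ (Submodule.span ℂ
      {g : HK | ∃ (s : 𝕋) (x : 𝒳) (h : Lp ℂ 2 P), x ∈ M ∧
        g = feat (fun ω => Φ s (θ (-s) ω) x) h}).topologicalClosure
  /-- the observable operator -/
  L : HK →ₗ[ℂ] Hob
  hHS : ∀ t : 𝕋, IsHilbertSchmidt ((L.comp (K t)).comp I)
  hL2 : ∀ v : Hin, MemLp (fun t => L ((K t) (I v))) 2 ν

/-!
On wedges, `⟪∧w, 𝒦(D₁,D₂) ∧u⟫` is the determinant of the cross Gram matrix of the observed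
trajectories `t ↦ L K^t I u_j`, viewed in `L²(ν; H_ob)`. Such determinants are Hermitian in the
two arguments, and they form positive semidefinite matrices because
`m! · det ⟪x_a, y_b⟫ = ∑_{σ,τ} sgn σ sgn τ ∏_a ⟪x_{τ a}, y_{σ a}⟫`
is a signed compression of a Hadamard product of Gram matrices (Schur product theorem).
Both properties pass from wedges to all of `⋀^m H_in` because the wedges span a dense subspace.
-/

open Equiv Matrix

theorem Matrix.sum_sign_mul_sign_mul_prod {n R : Type*} [Fintype n] [DecidableEq n] [CommRing R]
    (M : Matrix n n R) :
    ∑ σ : Perm n, ∑ τ : Perm n,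
        ((Perm.sign σ : ℤ) : R) * (Perm.sign τ : ℤ) * ∏ a, M (τ a) (σ a)
      = (Fintype.card n).factorial * M.det := by
  calc _ = ∑ σ : Perm n, ((Perm.sign σ : ℤ) : R) * (M.submatrix id σ).det := by
        simp_rw [det_apply', mul_assoc, Finset.mul_sum]; rfl
    _ = ∑ _σ : Perm n, M.det := by
        refine Finset.sum_congr rfl fun σ _ => ?_
        rw [det_permute', ← mul_assoc, ← Int.cast_mul, ← Units.val_mul, Int.units_mul_self,
          Units.val_one, Int.cast_one, one_mul]
    _ = _ := by simp [Fintype.card_perm]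

section GramDeterminant

variable {𝕜 E : Type*} [RCLike 𝕜] [NormedAddCommGroup E] [InnerProductSpace 𝕜 E]

theorem Matrix.posSemidef_prod_inner {κ A : Type*} [Finite κ] (h : κ → A → E) (s : Finset A) :
    (of fun p q => ∏ a ∈ s, inner 𝕜 (h p a) (h q a)).PosSemidef := by
  classical
  induction s using Finset.induction_on with
  | empty => simpa [gram] using posSemidef_gram 𝕜 fun _ : κ => (1 : 𝕜)
  | insert a s has ih =>
    convert (posSemidef_gram 𝕜 fun p => h p a).hadamard ih using 1
    ext p q
    simp [Finset.prod_insert has]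

theorem Matrix.posSemidef_det_inner {ι n : Type*} [Fintype ι] [Fintype n] [DecidableEq n]
    (g : ι → n → E) :
    (of fun β α => (of fun a b => inner 𝕜 (g β a) (g α b)).det).PosSemidef := by
  classical
  let S : Matrix (ι × Perm n) ι 𝕜 := of fun q α => if q.1 = α then (Perm.sign q.2 : ℤ) else 0
  have hS := (posSemidef_prod_inner (𝕜 := 𝕜) (fun p : ι × Perm n => g p.1 ∘ p.2)
    Finset.univ).conjTranspose_mul_mul_same S
  have hfac : ((Fintype.card n).factorial : 𝕜) ≠ 0 := by positivity
  convert hS.smul (a := ((Fintype.card n).factorial : 𝕜)⁻¹) (by positivity) using 1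
  ext β α
  rw [smul_apply, eq_inv_smul_iff₀ hfac, smul_eq_mul, of_apply, ← sum_sign_mul_sign_mul_prod]
  simp only [S, of_apply, Function.comp_apply, mul_apply, conjTranspose_apply, apply_ite,
    star_intCast, star_zero, ite_mul, zero_mul, mul_zero, Fintype.sum_prod_type,
    Finset.sum_ite_irrel, Finset.sum_const_zero, Finset.sum_ite_eq', Finset.mem_univ, if_true,
    Finset.sum_mul]
  exact Finset.sum_congr rfl fun σ _ => Finset.sum_congr rfl fun τ _ => by ring

theorem Matrix.star_det_inner {n : Type*} [Fintype n] [DecidableEq n] (x y : n → E) :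
    star (of fun i j => inner 𝕜 (x i) (y j)).det = (of fun i j => inner 𝕜 (y i) (x j)).det := by
  rw [← det_conjTranspose]
  congr 1
  ext i j
  simp

end GramDeterminant

section Dense

variable {𝕜 E F : Type*} [RCLike 𝕜] [NormedAddCommGroup E] [InnerProductSpace 𝕜 E]
  [NormedAddCommGroup F] [InnerProductSpace 𝕜 F]

theorem eq_zero_of_inner_eq_zero_of_dense_span {s : Set E}
    (hs : Dense (Submodule.span 𝕜 s : Set E)) {z : E} (h : ∀ y ∈ s, inner 𝕜 z y = 0) : z = 0 := by
  have : innerSL 𝕜 z = 0 := ContinuousLinearMap.ext_on hs fun y hy => h y hy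
  simpa using congrArg (fun f => f z) this

theorem ContinuousLinearMap.eq_adjoint_of_inner_eq_on [CompleteSpace E] [CompleteSpace F]
    {s : Set E} {t : Set F} (hs : Dense (Submodule.span 𝕜 s : Set E))
    (ht : Dense (Submodule.span 𝕜 t : Set F)) {A : E →L[𝕜] F} {B : F →L[𝕜] E}
    (h : ∀ x ∈ s, ∀ y ∈ t, inner 𝕜 (A x) y = inner 𝕜 x (B y)) : A = adjoint B := by
  refine ext_on hs fun x hx => sub_eq_zero.mp <| eq_zero_of_inner_eq_zero_of_dense_span ht ?_
  intro y hy
  rw [inner_sub_left, adjoint_inner_left, h x hx y hy, sub_self]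

end Dense

section PosKernel

variable {X 𝕜 W : Type*} [RCLike 𝕜] [NormedAddCommGroup W] [InnerProductSpace 𝕜 W]

def IsPosKernelOn (K : X → X → W →L[𝕜] W) (S : Set W) : Prop :=
  ∀ (ι : Type) [Fintype ι] (x : ι → X) (v : ι → W), (∀ i, v i ∈ S) →
    0 ≤ ∑ i, ∑ j, inner 𝕜 (v j) (K (x i) (x j) (v i))

theorem IsPosKernelOn.of_dense {K : X → X → W →L[𝕜] W} {S : Set W} (hK : IsPosKernelOn K S)
    (hS : Dense S) : IsPosKernelOn K Set.univ := by
  intro ι _ x v _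
  let q : (ι → W) → 𝕜 := fun v => ∑ i, ∑ j, inner 𝕜 (v j) (K (x i) (x j) (v i))
  have hclosed : IsClosed {v | 0 ≤ q v} := isClosed_le continuous_const (by fun_prop)
  have hdense : Dense (Set.univ.pi fun _ : ι => S) := dense_pi Set.univ fun _ _ => hS
  have hsub : Set.univ.pi (fun _ : ι => S) ⊆ {v | 0 ≤ q v} :=
    fun v hv => hK ι x v fun i => hv i trivial
  exact closure_minimal hsub hclosed (hdense v)

theorem isPosKernelOn_span {U : Type*} {K : X → X → W →L[𝕜] W} (s : U → W)
    (h : ∀ (ι : Type) [Fintype ι] (x : ι → X) (u : ι → U),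
      (of fun j i => inner 𝕜 (s (u j)) (K (x i) (x j) (s (u i)))).PosSemidef) :
    IsPosKernelOn K (Submodule.span 𝕜 (Set.range s)) := by
  intro ι _ x v hv
  have hrep : ∀ i, ∃ (n : ℕ) (c : Fin n → 𝕜) (u : Fin n → U), ∑ p, c p • s (u p) = v i := by
    intro i
    obtain ⟨n, c, w, hw⟩ := Submodule.mem_span_set'.mp (hv i)
    choose u hu using fun p => (w p).2
    exact ⟨n, c, u, by simpa only [hu] using hw⟩
  choose n c u hvu using hrep
  have hflat := (h (Σ i, Fin (n i)) (fun q => x q.1) (fun q => u q.1 q.2)).dotProduct_mulVec_nonneg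
    fun q => c q.1 q.2
  simp only [dotProduct, mulVec, of_apply, Pi.star_apply, RCLike.star_def, Fintype.sum_sigma,
    Finset.mul_sum] at hflat
  have hexpand : ∀ i j, inner 𝕜 (v j) (K (x i) (x j) (v i)) = ∑ q, ∑ p, starRingEnd 𝕜 (c j q) *
      (inner 𝕜 (s (u j q)) (K (x i) (x j) (s (u i p))) * c i p) := by
    intro i j
    simp only [← hvu, map_sum, map_smul, sum_inner, inner_sum, inner_smul_left, inner_smul_right,
      Finset.mul_sum]
    rw [Finset.sum_comm]
    exact Finset.sum_congr rfl fun q _ => Finset.sum_congr rfl fun p _ => by ring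
  simp only [hexpand]
  rw [Finset.sum_comm]
  exact hflat.trans_eq (Finset.sum_congr rfl fun j _ => Finset.sum_comm)

end PosKernel

namespace RDSTriple

variable {𝕋 Ω 𝒳 HK Hin Hob : Type*} [AddCommGroup 𝕋] [MeasurableSpace 𝕋] [MeasurableSpace Ω]
  [TopologicalSpace 𝒳] [MeasurableSpace 𝒳] [NormedAddCommGroup HK] [InnerProductSpace ℂ HK]
  {P : Measure Ω} {θ : 𝕋 → Ω → Ω} {feat : (Ω → 𝒳) → Lp ℂ 2 P → HK}
  [NormedAddCommGroup Hin] [InnerProductSpace ℂ Hin] [NormedAddCommGroup Hob]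
  [InnerProductSpace ℂ Hob] {ν : Measure 𝕋}

def trajectory (D : RDSTriple θ feat Hin Hob ν) (v : Hin) : Lp Hob 2 ν :=
  (D.hL2 v).toLp

theorem inner_trajectory (D₁ D₂ : RDSTriple θ feat Hin Hob ν) (v w : Hin) :
    ⟪D₁.trajectory v, D₂.trajectory w⟫
      = ∫ t, ⟪D₁.L (D₁.K t (D₁.I v)), D₂.L (D₂.K t (D₂.I w))⟫ ∂ν := by
  rw [L2.inner_def]
  refine integral_congr_ae ?_
  filter_upwards [(D₁.hL2 v).coeFn_toLp, (D₂.hL2 w).coeFn_toLp] with t h₁ h₂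
  rw [trajectory, trajectory, h₁, h₂]

end RDSTriple

theorem statement0_general
    {𝕋 : Type*} [AddCommGroup 𝕋] [MeasurableSpace 𝕋] (ν : Measure 𝕋)
    {𝒳 : Type*} [TopologicalSpace 𝒳] [MeasurableSpace 𝒳]
    {Ω : Type*} [MeasurableSpace Ω] (P : Measure Ω)
    -- the measure-preserving group `Θ = {θ_t}`
    (θ : 𝕋 → Ω → Ω)
    -- the vvRKHS `H_𝐤` of the `B(L²(Ω,P))`-valued kernel `𝐤` built from `k`,
    -- through its feature maps and their Gram identity
    {HK : Type*} [NormedAddCommGroup HK] [InnerProductSpace ℂ HK]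
    (feat : (Ω → 𝒳) → Lp ℂ 2 P → HK)
    -- the input and output Hilbert spaces
    {Hin Hob : Type*}
    [NormedAddCommGroup Hin] [InnerProductSpace ℂ Hin]
    [NormedAddCommGroup Hob] [InnerProductSpace ℂ Hob]
    (m : ℕ)
    -- the `m`-th exterior power `W = ⋀^m H_in`
    {W : Type*} [NormedAddCommGroup W] [InnerProductSpace ℂ W] [CompleteSpace W]
    (wedge : (Fin m → Hin) → W)
    (hwedge_dense : (Submodule.span ℂ (Set.range wedge)).topologicalClosure = ⊤)
    -- the operators `𝒦_k^{(m)}(D₁,D₂) = ⋀^m ∫_𝕋 (L₂K_{Φ₂}^tI₂)^* L₁K_{Φ₁}^tI₁ dν`,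
    -- characterized weakly on wedges
    (𝒦 : RDSTriple θ feat Hin Hob ν → RDSTriple θ feat Hin Hob ν → (W →L[ℂ] W))
    (h𝒦 : ∀ (D₁ D₂ : RDSTriple θ feat Hin Hob ν) (u w : Fin m → Hin),
      ⟪wedge w, 𝒦 D₁ D₂ (wedge u)⟫
        = Matrix.det (Matrix.of fun i j =>
            ∫ t, ⟪D₂.L ((D₂.K t) (D₂.I (w i))), D₁.L ((D₁.K t) (D₁.I (u j)))⟫ ∂ν)) :
    -- `𝒦_k^{(m)}` is a `B(⋀^m H_in)`-valued positive definite kernel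
    (∀ D₁ D₂ : RDSTriple θ feat Hin Hob ν,
      𝒦 D₁ D₂ = ContinuousLinearMap.adjoint (𝒦 D₂ D₁)) ∧
    (∀ (r : ℕ) (D : Fin r → RDSTriple θ feat Hin Hob ν) (v : Fin r → W),
      0 ≤ ∑ i, ∑ j, ⟪v j, 𝒦 (D i) (D j) (v i)⟫) := by
  have hdense : Dense (Submodule.span ℂ (Set.range wedge) : Set W) :=
    Submodule.dense_iff_topologicalClosure_eq_top.mpr hwedge_dense
  simp_rw [← RDSTriple.inner_trajectory] at h𝒦
  refine ⟨fun D₁ D₂ => ?_, fun r D v => ?_⟩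
  · refine ContinuousLinearMap.eq_adjoint_of_inner_eq_on hdense hdense ?_
    rintro _ ⟨u, rfl⟩ _ ⟨w, rfl⟩
    rw [← inner_conj_symm, h𝒦, h𝒦, ← RCLike.star_def, star_det_inner]
  · have hpos : IsPosKernelOn 𝒦 (Submodule.span ℂ (Set.range wedge)) :=
      isPosKernelOn_span wedge fun ι _ D u => by
        convert posSemidef_det_inner fun i a => (D i).trajectory (u i a) using 1
        ext j i
        exact h𝒦 _ _ _ _
    exact hpos.of_dense hdense (Fin r) D v fun _ => trivial

/-- With `𝒦_k^{(m)}(D₁,D₂) := ⋀^m ∫_𝕋 (L₂K_{Φ₂}^tI₂)^* L₁K_{Φ₁}^tI₁ dν`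
(the integral taken in the weak sense, and `⋀^m H_in` modeled by a Hilbert space `W`
with a wedge map whose Gram matrices are the determinants of the inner-product
matrices and whose wedges span a dense subspace), the kernel `𝒦_k^{(m)}` is a
`B(⋀^m H_in)`-valued positive definite kernel on `𝒯_k(H_in,H_ob;ν)`:
`𝒦_k^{(m)}(D₁,D₂) = 𝒦_k^{(m)}(D₂,D₁)^*` and
`∑_{i,j} ⟨𝒦_k^{(m)}(D_i,D_j) v_i, v_j⟩ ≥ 0` for all finite families. -/
theorem statement0
    {𝕋 : Type*} [AddCommGroup 𝕋] [MeasurableSpace 𝕋] (ν : Measure 𝕋)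
    {𝒳 : Type*} [TopologicalSpace 𝒳] [MeasurableSpace 𝒳] [OpensMeasurableSpace 𝒳]
    (k : 𝒳 → 𝒳 → ℂ)
    (hpd : IsPosDefKernel k)
    (hbdd : ∃ C : ℝ, ∀ x y, ‖k x y‖ ≤ C)
    (hcont : Continuous fun p : 𝒳 × 𝒳 => k p.1 p.2)
    {Ω : Type*} [MeasurableSpace Ω] (P : Measure Ω) [IsProbabilityMeasure P]
    -- the measure-preserving group `Θ = {θ_t}`
    (θ : 𝕋 → Ω → Ω)
    (hθmp : ∀ t, MeasurePreserving (θ t) P P)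
    (hθbij : ∀ t, Function.Bijective (θ t))
    (hθ0 : θ 0 = id) (hθadd : ∀ s t, θ s ∘ θ t = θ (s + t))
    -- the vvRKHS `H_𝐤` of the `B(L²(Ω,P))`-valued kernel `𝐤` built from `k`,
    -- through its feature maps and their Gram identity
    {HK : Type*} [NormedAddCommGroup HK] [InnerProductSpace ℂ HK] [CompleteSpace HK]
    (feat : (Ω → 𝒳) → Lp ℂ 2 P → HK)
    (hGram : ∀ (X Y : Ω → 𝒳), Measurable X → Measurable Y → ∀ f g : Lp ℂ 2 P,
      ⟪feat X f, feat Y g⟫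
        = ∫ ω, k (Y ω) (X ω) * g ω * (starRingEnd ℂ) (f ω) ∂P)
    -- the input and output Hilbert spaces
    {Hin Hob : Type*}
    [NormedAddCommGroup Hin] [InnerProductSpace ℂ Hin] [CompleteSpace Hin]
    [NormedAddCommGroup Hob] [InnerProductSpace ℂ Hob] [CompleteSpace Hob]
    (m : ℕ)
    -- the `m`-th exterior power `W = ⋀^m H_in`
    {W : Type*} [NormedAddCommGroup W] [InnerProductSpace ℂ W] [CompleteSpace W]
    (wedge : (Fin m → Hin) → W)
    (hwedge : ∀ u w : Fin m → Hin,
      ⟪wedge u, wedge w⟫ = Matrix.det (Matrix.of fun i j => ⟪u i, w j⟫))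
    (hwedge_dense : (Submodule.span ℂ (Set.range wedge)).topologicalClosure = ⊤)
    -- the operators `𝒦_k^{(m)}(D₁,D₂) = ⋀^m ∫_𝕋 (L₂K_{Φ₂}^tI₂)^* L₁K_{Φ₁}^tI₁ dν`,
    -- characterized weakly on wedges
    (𝒦 : RDSTriple θ feat Hin Hob ν → RDSTriple θ feat Hin Hob ν → (W →L[ℂ] W))
    (h𝒦 : ∀ (D₁ D₂ : RDSTriple θ feat Hin Hob ν) (u w : Fin m → Hin),
      ⟪wedge w, 𝒦 D₁ D₂ (wedge u)⟫
        = Matrix.det (Matrix.of fun i j =>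
            ∫ t, ⟪D₂.L ((D₂.K t) (D₂.I (w i))), D₁.L ((D₁.K t) (D₁.I (u j)))⟫ ∂ν)) :
    -- `𝒦_k^{(m)}` is a `B(⋀^m H_in)`-valued positive definite kernel
    (∀ D₁ D₂ : RDSTriple θ feat Hin Hob ν,
      𝒦 D₁ D₂ = ContinuousLinearMap.adjoint (𝒦 D₂ D₁)) ∧
    (∀ (r : ℕ) (D : Fin r → RDSTriple θ feat Hin Hob ν) (v : Fin r → W),
      0 ≤ ∑ i, ∑ j, ⟪v j, 𝒦 (D i) (D j) (v i)⟫) :=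
  statement0_general ν P θ feat m wedge hwedge_dense 𝒦 h𝒦
end
end

section
/- Let 𝕋 = ℝ or ℤ, T ∈ 𝕋 with T > 0, ν a finite Borel measure on [0,T] ∩ 𝕋, k a bounded continuous positive definite kernel on a topological space 𝒳, and (Ω,P) a probability space with a group Θ = {θ_t}_{t∈𝕋} of measure-preserving measurable bijections. For i = 1,2 let Φ_i be a random dynamical system on ℳ_i ⊂ 𝒳 with respect to Θ and x_i ∈ ℳ_i, and assume that each path t ↦ Φ_i(t,ω,x_i) is continuous and that ω ↦ Φ_i(·,ω,x_i) is a measurable map from Ω to C⁰(𝕋,𝒳). Let κ_T be the positive definite kernel on C⁰(𝕋,𝒳) given by κ_T(g,h) := ∫_{[0,T]} k(g(t), h(t)) dν(t), let H_{κ_T} be its RKHS, and let μ_{ℒ(Φ_i(·,·,x_i))} := ∫_Ω (κ_T)_{Φ_i(·,ω,x_i)} dP(ω) ∈ H_{κ_T} (Bochner integral) be the kernel mean embedding of the law of the path process of Φ_i started at x_i. Then ⟨μ_{ℒ(Φ_1(·,·,x_1))}, μ_{ℒ(Φ_2(·,·,x_2))}⟩_{H_{κ_T}} = ∫_Ω ∫_Ω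 ∫_{[0,T]} k(Φ_1(t,ω,x_1), Φ_2(t,η,x_2)) dν(t) dP(ω) dP(η), i.e. the metric 𝔩_1^T((Φ_1,x_1),(Φ_2,x_2)) equals the kernel-mean-discrepancy inner product of the laws of the two random processes. -/
/-!
The Bochner integral commutes with continuous linear functionals, so both kernel mean
embeddings can be pulled out of the inner product, one slot at a time; the reproducing
identity `⟪ψ g, ψ h⟫ = κ_T(h, g)` then turns the integrand into the time integral of `k`.
-/

open MeasureTheory
open scoped ComplexOrder BigOperators

noncomputable section

local notation "⟪" x ", " y "⟫" => @inner ℂ _ _ x y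

section InnerIntegral

variable {𝕜 E α β : Type*} [RCLike 𝕜] [NormedAddCommGroup E] [InnerProductSpace 𝕜 E]
  [CompleteSpace E] [NormedSpace ℝ E] [MeasurableSpace α] [MeasurableSpace β]
  {μ : Measure α} {ν : Measure β}

theorem integral_inner_const {f : α → E} (hf : Integrable f μ) (c : E) :
    ∫ a, inner 𝕜 (f a) c ∂μ = inner 𝕜 (∫ a, f a ∂μ) c := by
  calc ∫ a, inner 𝕜 (f a) c ∂μ
      = ∫ a, (starRingEnd 𝕜) (inner 𝕜 c (f a)) ∂μ := by simp_rw [inner_conj_symm]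
    _ = (starRingEnd 𝕜) (inner 𝕜 c (∫ a, f a ∂μ)) := by rw [integral_conj, integral_inner hf]
    _ = inner 𝕜 (∫ a, f a ∂μ) c := inner_conj_symm _ _

theorem inner_integral_integral {f : α → E} {g : β → E} (hf : Integrable f μ)
    (hg : Integrable g ν) :
    inner 𝕜 (∫ a, f a ∂μ) (∫ b, g b ∂ν) = ∫ a, ∫ b, inner 𝕜 (f a) (g b) ∂ν ∂μ := by
  simp_rw [integral_inner hg, integral_inner_const hf]

end InnerIntegral

-- Mathlib's inner product is conjugate-linear in its first slot, so the paper's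
-- `⟨μ₁, μ₂⟩` is `⟪μ₂, μ₁⟫` here.
theorem statement5_general
    {𝕋 : Type*} [TopologicalSpace 𝕋] [MeasurableSpace 𝕋]
    [AddCommGroup 𝕋] [PartialOrder 𝕋]
    (ν : Measure 𝕋) (T : 𝕋)
    {𝒳 : Type*} [TopologicalSpace 𝒳]
    (k : 𝒳 → 𝒳 → ℂ)
    {Ω : Type*} [MeasurableSpace Ω] (P : Measure Ω)
    -- the two random dynamical systems and their initial points
    (Φ₁ Φ₂ : 𝕋 → Ω → 𝒳 → 𝒳) (x₁ x₂ : 𝒳)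
    -- continuous paths, measurable as maps into `C⁰(𝕋,𝒳)`
    (path₁ path₂ : Ω → C(𝕋, 𝒳))
    (hpath₁ : ∀ ω t, path₁ ω t = Φ₁ t ω x₁)
    (hpath₂ : ∀ ω t, path₂ ω t = Φ₂ t ω x₂)
    -- the RKHS of the integral-type kernel `κ_T`, via its feature map `ψ`
    {Hκ : Type*} [NormedAddCommGroup Hκ] [InnerProductSpace ℂ Hκ] [CompleteSpace Hκ]
    (ψ : C(𝕋, 𝒳) → Hκ)
    (hψ : ∀ g h : C(𝕋, 𝒳),
      ⟪ψ g, ψ h⟫ = ∫ t in Set.Icc (0 : 𝕋) T, k (h t) (g t) ∂ν)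
    -- Bochner integrability of the embedded paths
    (hInt₁ : Integrable (fun ω => ψ (path₁ ω)) P)
    (hInt₂ : Integrable (fun ω => ψ (path₂ ω)) P) :
    ⟪∫ ω, ψ (path₂ ω) ∂P, ∫ ω, ψ (path₁ ω) ∂P⟫
      = ∫ η, ∫ ω, ∫ t in Set.Icc (0 : 𝕋) T,
          k (Φ₁ t ω x₁) (Φ₂ t η x₂) ∂ν ∂P ∂P := by
  simp_rw [inner_integral_integral hInt₂ hInt₁, hψ, hpath₁, hpath₂]

/-- Let `Φ₁, Φ₂` be random dynamical systems on `ℳ₁, ℳ₂ ⊂ 𝒳` with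
respect to a measure-preserving group `Θ`, with continuous paths, started at
`x₁ ∈ ℳ₁, x₂ ∈ ℳ₂`.  Let `κ_T(g,h) := ∫_{[0,T]} k(g t, h t) dν(t)` on `C⁰(𝕋,𝒳)`,
with RKHS `H_{κ_T}` (modeled by a feature map `ψ`), and let
`μ_i := ∫_Ω ψ(Φ_i(·,ω,x_i)) dP(ω)` be the kernel mean embeddings of the laws of the
path processes.  Then `⟨μ₁, μ₂⟩_{H_{κ_T}}
= ∫_Ω ∫_Ω ∫_{[0,T]} k(Φ₁(t,ω,x₁), Φ₂(t,η,x₂)) dν(t) dP(ω) dP(η)`,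
i.e. `𝔩₁^T((Φ₁,x₁),(Φ₂,x₂))` is the KMMD inner product of the two laws.
(The Mathlib inner product `⟪·,·⟫` is conjugate-linear in its first slot, so
`⟨μ₁, μ₂⟩` of the paper is `⟪μ₂, μ₁⟫` below.) -/
theorem statement5
    {𝕋 : Type*} [TopologicalSpace 𝕋] [MeasurableSpace 𝕋] [OpensMeasurableSpace 𝕋]
    [AddCommGroup 𝕋] [PartialOrder 𝕋]
    (ν : Measure 𝕋) [IsFiniteMeasure ν] (T : 𝕋) (hT : 0 < T)
    {𝒳 : Type*} [TopologicalSpace 𝒳] [MeasurableSpace 𝒳] [OpensMeasurableSpace 𝒳]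
    (k : 𝒳 → 𝒳 → ℂ)
    (hpd : IsPosDefKernel k)
    (hbdd : ∃ C : ℝ, ∀ x y, ‖k x y‖ ≤ C)
    (hcont : Continuous fun p : 𝒳 × 𝒳 => k p.1 p.2)
    {Ω : Type*} [MeasurableSpace Ω] (P : Measure Ω) [IsProbabilityMeasure P]
    -- the measure-preserving group Θ
    (θ : 𝕋 → Ω → Ω)
    (hθmp : ∀ t, MeasurePreserving (θ t) P P)
    (hθ0 : θ 0 = id) (hθadd : ∀ s t, θ s ∘ θ t = θ (s + t))
    -- the two random dynamical systems and their initial points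
    (M₁ M₂ : Set 𝒳) (Φ₁ Φ₂ : 𝕋 → Ω → 𝒳 → 𝒳) (x₁ x₂ : 𝒳)
    (hx₁ : x₁ ∈ M₁) (hx₂ : x₂ ∈ M₂)
    (hmaps₁ : ∀ t ω x, x ∈ M₁ → Φ₁ t ω x ∈ M₁)
    (hmaps₂ : ∀ t ω x, x ∈ M₂ → Φ₂ t ω x ∈ M₂)
    (hmeas₁ : Measurable fun p : 𝕋 × Ω × M₁ => Φ₁ p.1 p.2.1 (p.2.2 : 𝒳))
    (hmeas₂ : Measurable fun p : 𝕋 × Ω × M₂ => Φ₂ p.1 p.2.1 (p.2.2 : 𝒳))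
    (hinit₁ : ∀ ω x, x ∈ M₁ → Φ₁ 0 ω x = x)
    (hinit₂ : ∀ ω x, x ∈ M₂ → Φ₂ 0 ω x = x)
    (hcoc₁ : ∀ t s ω x, x ∈ M₁ → Φ₁ (t + s) ω x = Φ₁ t (θ s ω) (Φ₁ s ω x))
    (hcoc₂ : ∀ t s ω x, x ∈ M₂ → Φ₂ (t + s) ω x = Φ₂ t (θ s ω) (Φ₂ s ω x))
    -- continuous paths, measurable as maps into `C⁰(𝕋,𝒳)`
    (path₁ path₂ : Ω → C(𝕋, 𝒳))
    (hpath₁ : ∀ ω t, path₁ ω t = Φ₁ t ω x₁)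
    (hpath₂ : ∀ ω t, path₂ ω t = Φ₂ t ω x₂)
    (hpathmeas₁ : @Measurable Ω C(𝕋, 𝒳) _ (borel _) path₁)
    (hpathmeas₂ : @Measurable Ω C(𝕋, 𝒳) _ (borel _) path₂)
    -- the RKHS of the integral-type kernel `κ_T`, via its feature map `ψ`
    {Hκ : Type*} [NormedAddCommGroup Hκ] [InnerProductSpace ℂ Hκ] [CompleteSpace Hκ]
    (ψ : C(𝕋, 𝒳) → Hκ)
    (hψ : ∀ g h : C(𝕋, 𝒳),
      ⟪ψ g, ψ h⟫ = ∫ t in Set.Icc (0 : 𝕋) T, k (h t) (g t) ∂ν)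
    (hψdense : (Submodule.span ℂ (Set.range ψ)).topologicalClosure = ⊤)
    -- Bochner integrability of the embedded paths
    (hInt₁ : Integrable (fun ω => ψ (path₁ ω)) P)
    (hInt₂ : Integrable (fun ω => ψ (path₂ ω)) P) :
    ⟪∫ ω, ψ (path₂ ω) ∂P, ∫ ω, ψ (path₁ ω) ∂P⟫
      = ∫ η, ∫ ω, ∫ t in Set.Icc (0 : 𝕋) T,
          k (Φ₁ t ω x₁) (Φ₂ t η x₂) ∂ν ∂P ∂P :=
  statement5_general ν T k P Φ₁ Φ₂ x₁ x₂ path₁ path₂ hpath₁ hpath₂ ψ hψ hInt₁ hInt₂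
end
end

section
/- Let 𝕋 be a topological space (e.g. ℝ or ℤ), μ a finite Borel measure on 𝕋, 𝒳 a topological space, and k a bounded continuous positive definite kernel on 𝒳. Then κ(g,h) := ∫_𝕋 k(g(t), h(t)) dμ(t) defines a positive definite kernel on the space C⁰(𝕋, 𝒳) of continuous maps 𝕋 → 𝒳: κ(g,h) = conj(κ(h,g)) for all g,h, and for every finite family g_1,…,g_n ∈ C⁰(𝕋,𝒳) and c_1,…,c_n ∈ ℂ, ∑_{i,j=1}^n c_i conj(c_j) κ(g_i, g_j) ≥ 0. -/
/-!
Evaluation at a point `t` pulls `k` back to a positive definite kernel `(g, h) ↦ k (g t) (h t)` on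
`C(𝕋, 𝒳)`. A Gram sum of the integrated kernel is the integral of these pointwise Gram sums, hence
nonnegative; boundedness and continuity of `k` provide the integrability needed to move the finite
sums inside the integral.
-/

open MeasureTheory
open scoped ComplexOrder BigOperators

noncomputable section

local notation "⟪" x ", " y "⟫" => @inner ℂ _ _ x y

theorem IsPosDefKernel.comp {𝒳 𝒴 : Type*} {k : 𝒳 → 𝒳 → ℂ} (hk : IsPosDefKernel k)
    (f : 𝒴 → 𝒳) : IsPosDefKernel fun x y => k (f x) (f y) :=
  ⟨fun x y => hk.1 (f x) (f y), fun n x c => hk.2 n (f ∘ x) c⟩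

theorem IsPosDefKernel.integral {Ω 𝒳 : Type*} [MeasurableSpace Ω] (μ : Measure Ω)
    {K : Ω → 𝒳 → 𝒳 → ℂ} (hK : ∀ t, IsPosDefKernel (K t))
    (hint : ∀ x y, Integrable (fun t => K t x y) μ) :
    IsPosDefKernel fun x y => ∫ t, K t x y ∂μ := by
  refine ⟨fun x y => ?_, fun n x c => ?_⟩
  · rw [← integral_conj]
    exact integral_congr_ae (.of_forall fun t => (hK t).1 x y)
  · have hint' : ∀ i j, Integrable (fun t => c i * starRingEnd ℂ (c j) * K t (x i) (x j)) μ :=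
      fun i j => (hint _ _).const_mul _
    calc (0 : ℂ)
        ≤ ∫ t, ∑ i, ∑ j, c i * starRingEnd ℂ (c j) * K t (x i) (x j) ∂μ :=
          integral_nonneg fun t => (hK t).2 n x c
      _ = ∑ i, ∑ j, c i * starRingEnd ℂ (c j) * ∫ t, K t (x i) (x j) ∂μ := by
          simp only [integral_finsetSum _ fun i _ => integrable_finsetSum _ fun j _ => hint' i j,
            integral_finsetSum _ fun j _ => hint' _ j, integral_const_mul]

theorem integrable_kernel_comp_continuousMap {𝕋 𝒳 : Type*} [TopologicalSpace 𝕋]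
    [MeasurableSpace 𝕋] [OpensMeasurableSpace 𝕋] (μ : Measure 𝕋) [IsFiniteMeasure μ]
    [TopologicalSpace 𝒳] {k : 𝒳 → 𝒳 → ℂ} (hbdd : ∃ C : ℝ, ∀ x y, ‖k x y‖ ≤ C)
    (hcont : Continuous fun p : 𝒳 × 𝒳 => k p.1 p.2) (g h : C(𝕋, 𝒳)) :
    Integrable (fun t => k (g t) (h t)) μ := by
  obtain ⟨C, hC⟩ := hbdd
  exact .of_bound (hcont.comp (g.continuous.prodMk h.continuous)).aestronglyMeasurable C
    (.of_forall fun t => hC (g t) (h t))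

/-- If `𝕋` is a topological space with a finite Borel measure `μ`, and
`k` is a bounded continuous positive definite kernel on a topological space `𝒳`, then
the integral-type kernel `κ(g,h) := ∫_𝕋 k(g t, h t) dμ(t)` is a positive definite
kernel on `C⁰(𝕋,𝒳)`: it is Hermitian and all Gram sums
`∑_{i,j} c_i conj(c_j) κ(g_i,g_j)` are nonnegative. -/
theorem statement6
    {𝕋 : Type*} [TopologicalSpace 𝕋] [MeasurableSpace 𝕋] [OpensMeasurableSpace 𝕋]
    (μ : Measure 𝕋) [IsFiniteMeasure μ]
    {𝒳 : Type*} [TopologicalSpace 𝒳]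
    (k : 𝒳 → 𝒳 → ℂ)
    (hpd : IsPosDefKernel k)
    (hbdd : ∃ C : ℝ, ∀ x y, ‖k x y‖ ≤ C)
    (hcont : Continuous fun p : 𝒳 × 𝒳 => k p.1 p.2) :
    (∀ g h : C(𝕋, 𝒳),
      (∫ t, k (g t) (h t) ∂μ) = (starRingEnd ℂ) (∫ t, k (h t) (g t) ∂μ)) ∧
    (∀ (n : ℕ) (g : Fin n → C(𝕋, 𝒳)) (c : Fin n → ℂ),
      0 ≤ ∑ i, ∑ j, c i * (starRingEnd ℂ) (c j) * ∫ t, k ((g i) t) ((g j) t) ∂μ) :=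
  IsPosDefKernel.integral μ (fun t => hpd.comp fun g : C(𝕋, 𝒳) => g t)
    (integrable_kernel_comp_continuousMap μ hbdd hcont)
end
end

section
/- Let V be a complex Hilbert space, 𝒳 a set, 𝐤: 𝒳×𝒳 → B(V) a B(V)-valued positive definite kernel with vvRKHS H_𝐤, and v ∈ V. Let k_v(x,y) := ⟨v, 𝐤(x,y)v⟩_V, a positive definite kernel on 𝒳 with RKHS H_{k_v}. Then the assignment 𝐤_x v ↦ (k_v)_x (where ((k_v)_x)(y) = k_v(x,y)) extends to an isometric isomorphism of Hilbert spaces from the closure in H_𝐤 of span{𝐤_x v : x ∈ 𝒳} onto H_{k_v}. -/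
/-!
Both families `x ↦ 𝐤_x v` in `H_𝐤` and `x ↦ (k_v)_x` in `H_{k_v}` have Gram matrix `k_v`, so
`∑ cᵢ 𝐤_{xᵢ} v ↦ ∑ cᵢ (k_v)_{xᵢ}` preserves norms of finite linear combinations. It therefore
extends by continuity to an isometry from the closed span of the `𝐤_x v` onto the closure of the
span of the `(k_v)_x`, which is all of `H_{k_v}`.
-/

open scoped ComplexOrder BigOperators

noncomputable section

local notation "⟪" x ", " y "⟫" => @inner ℂ _ _ x y

section GramMatrix

variable {𝕜 ι E F : Type*} [RCLike 𝕜]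
  [NormedAddCommGroup E] [InnerProductSpace 𝕜 E] [NormedAddCommGroup F] [InnerProductSpace 𝕜 F]

theorem Finsupp.inner_linearCombination_eq_of_inner_eq {f : ι → E} {g : ι → F}
    (h : ∀ i j, inner 𝕜 (f i) (f j) = inner 𝕜 (g i) (g j)) (a b : ι →₀ 𝕜) :
    inner 𝕜 (linearCombination 𝕜 f a) (linearCombination 𝕜 f b) =
      inner 𝕜 (linearCombination 𝕜 g a) (linearCombination 𝕜 g b) := by
  simp only [linearCombination_apply, Finsupp.sum_inner, Finsupp.inner_sum, inner_smul_left,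
    inner_smul_right, h]

theorem Finsupp.norm_linearCombination_eq_of_inner_eq {f : ι → E} {g : ι → F}
    (h : ∀ i j, inner 𝕜 (f i) (f j) = inner 𝕜 (g i) (g j)) (a : ι →₀ 𝕜) :
    ‖linearCombination 𝕜 f a‖ = ‖linearCombination 𝕜 g a‖ := by
  rw [@norm_eq_sqrt_re_inner 𝕜, @norm_eq_sqrt_re_inner 𝕜 F,
    inner_linearCombination_eq_of_inner_eq h]

open Submodule in
theorem exists_linearIsometryEquiv_topologicalClosure_span_of_inner_eq
    [CompleteSpace E] [CompleteSpace F] {f : ι → E} {g : ι → F}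
    (h : ∀ i j, inner 𝕜 (f i) (f j) = inner 𝕜 (g i) (g j))
    (hg : (span 𝕜 (Set.range g)).topologicalClosure = ⊤) :
    ∃ T : (span 𝕜 (Set.range f)).topologicalClosure ≃ₗᵢ[𝕜] F,
      ∀ i, T ⟨f i, le_topologicalClosure _ (subset_span ⟨i, rfl⟩)⟩ = g i := by
  set L := Finsupp.linearCombination 𝕜 f
  set q := (span 𝕜 (Set.range f)).topologicalClosure
  set e : (ι →₀ 𝕜) →ₗ[𝕜] q := L.codRestrict q fun a =>
    le_topologicalClosure _ ((Finsupp.range_linearCombination 𝕜).le (LinearMap.mem_range_self L a))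
  have he : DenseRange e := Topology.IsInducing.subtypeVal.dense_iff.2 fun x => by
    rw [← Set.range_comp]
    change (x : E) ∈ closure (Set.range L)
    rw [← LinearMap.coe_range, Finsupp.range_linearCombination, ← topologicalClosure_coe]
    exact x.2
  have hM : DenseRange (Finsupp.linearCombination 𝕜 g) := by
    rw [DenseRange, ← LinearMap.coe_range, Finsupp.range_linearCombination,
      dense_iff_topologicalClosure_eq_top, hg]
  set T := (LinearEquiv.refl 𝕜 (ι →₀ 𝕜)).extendOfIsometry e _ he hM
    fun a => (Finsupp.norm_linearCombination_eq_of_inner_eq h a).symm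
  refine ⟨T, fun i => ?_⟩
  calc _ = T (e (Finsupp.single i 1)) := congrArg T (Subtype.ext (by simp [e, L]))
    _ = g i := (LinearEquiv.extendOfIsometry_eq ..).trans (by simp)

end GramMatrix

theorem statement11_general
    {V : Type*} [NormedAddCommGroup V] [InnerProductSpace ℂ V]
    {𝒳 : Type*} (K : 𝒳 → 𝒳 → (V →L[ℂ] V))
    -- the vvRKHS `H_K`, through its feature maps and their Gram identity
    {HK : Type*} [NormedAddCommGroup HK] [InnerProductSpace ℂ HK] [CompleteSpace HK]
    (feat : 𝒳 → V →L[ℂ] HK)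
    (hfeat : ∀ (x y : 𝒳) (u w : V), ⟪feat x u, feat y w⟫ = ⟪u, (K x y) w⟫)
    (v : V)
    -- the RKHS `H_v` of `k_v`, through its feature map `ψ : x ↦ (k_v)_x`
    {Hv : Type*} [NormedAddCommGroup Hv] [InnerProductSpace ℂ Hv] [CompleteSpace Hv]
    (ψ : 𝒳 → Hv)
    (hψ : ∀ x y : 𝒳, ⟪ψ x, ψ y⟫ = ⟪v, (K x y) v⟫)
    (hψdense : (Submodule.span ℂ (Set.range ψ)).topologicalClosure = ⊤) :
    ∃ E : ((Submodule.span ℂ (Set.range fun x : 𝒳 => feat x v)).topologicalClosure)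
            ≃ₗᵢ[ℂ] Hv,
      ∀ (x : 𝒳)
        (hx : feat x v ∈
          (Submodule.span ℂ (Set.range fun x : 𝒳 => feat x v)).topologicalClosure),
        E ⟨feat x v, hx⟩ = ψ x := by
  obtain ⟨E, hE⟩ := exists_linearIsometryEquiv_topologicalClosure_span_of_inner_eq
    (fun x y => (hfeat x y v v).trans (hψ x y).symm) hψdense
  exact ⟨E, fun x _ => hE x⟩

/-- Let `K : 𝒳×𝒳 → B(V)` be a `B(V)`-valued positive definite kernel
with vvRKHS `H_K` (modeled through its feature maps `feat x : V → H_K`, `v ↦ 𝐤_x v`,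
with the reproducing Gram identity), `v ∈ V`, and let `k_v(x,y) := ⟨v, K(x,y) v⟩` be
the induced scalar positive definite kernel with RKHS `H_v` (modeled through its
feature map `ψ : 𝒳 → H_v` with dense span).  Then `𝐤_x v ↦ (k_v)_x` extends to an
isometric isomorphism from the closure of `span{𝐤_x v : x ∈ 𝒳}` in `H_K` onto
`H_{k_v}`. -/
theorem statement11
    {V : Type*} [NormedAddCommGroup V] [InnerProductSpace ℂ V] [CompleteSpace V]
    {𝒳 : Type*} (K : 𝒳 → 𝒳 → (V →L[ℂ] V))
    (hherm : ∀ x y, K x y = ContinuousLinearMap.adjoint (K y x))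
    (hpos : ∀ (n : ℕ) (x : Fin n → 𝒳) (w : Fin n → V),
      0 ≤ ∑ i, ∑ j, ⟪w j, (K (x i) (x j)) (w i)⟫)
    -- the vvRKHS `H_K`, through its feature maps and their Gram identity
    {HK : Type*} [NormedAddCommGroup HK] [InnerProductSpace ℂ HK] [CompleteSpace HK]
    (feat : 𝒳 → V →L[ℂ] HK)
    (hfeat : ∀ (x y : 𝒳) (u w : V), ⟪feat x u, feat y w⟫ = ⟪u, (K x y) w⟫)
    (v : V)
    -- the RKHS `H_v` of `k_v`, through its feature map `ψ : x ↦ (k_v)_x`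
    {Hv : Type*} [NormedAddCommGroup Hv] [InnerProductSpace ℂ Hv] [CompleteSpace Hv]
    (ψ : 𝒳 → Hv)
    (hψ : ∀ x y : 𝒳, ⟪ψ x, ψ y⟫ = ⟪v, (K x y) v⟫)
    (hψdense : (Submodule.span ℂ (Set.range ψ)).topologicalClosure = ⊤) :
    ∃ E : ((Submodule.span ℂ (Set.range fun x : 𝒳 => feat x v)).topologicalClosure)
            ≃ₗᵢ[ℂ] Hv,
      ∀ (x : 𝒳)
        (hx : feat x v ∈
          (Submodule.span ℂ (Set.range fun x : 𝒳 => feat x v)).topologicalClosure),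
        E ⟨feat x v, hx⟩ = ψ x :=
  statement11_general K feat hfeat v ψ hψ hψdense
end
end

section
/- Let 𝒳 be a topological space equipped with its Borel σ-algebra, k a bounded continuous positive definite kernel on 𝒳, and (Ω,P) a probability space. For measurable X, Y: Ω → 𝒳, define 𝐤(X,Y): L²(Ω,P) → L²(Ω,P) by (𝐤(X,Y)f)(ω) := k(X(ω),Y(ω)) f(ω). Then: (a) 𝐤(X,Y) is a bounded linear operator with operator norm ‖𝐤(X,Y)‖ ≤ ess sup_{ω∈Ω} |k(X(ω),Y(ω))| ≤ sup_{x,y∈𝒳} |k(x,y)| < ∞; and (b) 𝐤 is a B(L²(Ω,P))-valued positive definite kernel on the set M(Ω,𝒳) of measurable maps Ω → 𝒳: 𝐤(X,Y) = 𝐤(Y,X)^* for all X,Y, and ∑_{i,j=1}^n ⟨𝐤(X_i,X_j) f_i, f_j⟩_{L²(Ω)} ≥ 0 for all n, X_1,…,X_n ∈ M(Ω,𝒳), f_1,…,f_n ∈ L²(Ω,P). -/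
/-!
Each `K X Y` is multiplication by the bounded function `ω ↦ k (X ω) (Y ω)`, so its norm is at
most the essential supremum of that function. The adjoint of multiplication by `g` is
multiplication by `conj g`, which is multiplication by `ω ↦ k (Y ω) (X ω)` by Hermitian symmetry
of `k`. Finally, the Gram sum `∑ i j, ⟪f j, K (X i) (X j) (f i)⟫` is the integral over `Ω` of the
pointwise Gram sums `∑ i j, f i ω * conj (f j ω) * k (X i ω) (X j ω)`, which are nonnegative
because `k` is positive definite.
-/

open MeasureTheory
open scoped ComplexOrder BigOperators

noncomputable section

local notation "⟪" x ", " y "⟫" => @inner ℂ _ _ x y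

open ComplexConjugate ENNReal Filter Set

section

variable {Ω : Type*} [MeasurableSpace Ω] {P : Measure Ω}

theorem essSup_comp_le_iSup [NeZero P] {α : Type*} {h : α → ℝ} (hb : BddBelow (range h))
    (ha : BddAbove (range h)) (φ : Ω → α) : essSup (h ∘ φ) P ≤ ⨆ a, h a := by
  obtain ⟨m, hm⟩ := hb
  exact essSup_le_of_ae_le _ (ae_of_all _ fun ω => le_ciSup ha (φ ω))
    (isCoboundedUnder_le_of_le (ae P) fun ω => hm (mem_range_self (φ ω)))

theorem essSup_nonneg_of_nonneg [NeZero P] {f : Ω → ℝ} (hf : 0 ≤ f)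
    (hbdd : IsBoundedUnder (· ≤ ·) (ae P) f) : 0 ≤ essSup f P :=
  (ae_le_essSup hbdd).exists.elim fun ω hω => (hf ω).trans hω

def IsMultiplicationOperator {p : ℝ≥0∞} [Fact (1 ≤ p)] (T : Lp ℂ p P →L[ℂ] Lp ℂ p P)
    (g : Ω → ℂ) : Prop :=
  ∀ f : Lp ℂ p P, (T f : Ω → ℂ) =ᵐ[P] fun ω => g ω * f ω

namespace IsMultiplicationOperator

variable {g : Ω → ℂ}

theorem opNorm_le {p : ℝ≥0∞} [Fact (1 ≤ p)] {T : Lp ℂ p P →L[ℂ] Lp ℂ p P}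
    (hT : IsMultiplicationOperator T g) {M : ℝ} (hM : 0 ≤ M) (hg : ∀ᵐ ω ∂P, ‖g ω‖ ≤ M) :
    ‖T‖ ≤ M :=
  T.opNorm_le_bound hM fun f => Lp.norm_le_mul_norm_of_ae_le_mul <| by
    filter_upwards [hT f, hg] with ω hTf hgω
    rw [hTf, norm_mul]
    exact mul_le_mul_of_nonneg_right hgω (norm_nonneg _)

theorem opNorm_le_essSup [NeZero P] {p : ℝ≥0∞} [Fact (1 ≤ p)] {T : Lp ℂ p P →L[ℂ] Lp ℂ p P}
    (hT : IsMultiplicationOperator T g) (hg : IsBoundedUnder (· ≤ ·) (ae P) fun ω => ‖g ω‖) :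
    ‖T‖ ≤ essSup (fun ω => ‖g ω‖) P :=
  hT.opNorm_le (essSup_nonneg_of_nonneg (fun ω => norm_nonneg (g ω)) hg) (ae_le_essSup hg)

variable {T S : Lp ℂ 2 P →L[ℂ] Lp ℂ 2 P}

theorem inner_apply_ae_eq (hT : IsMultiplicationOperator T g) (f f' : Lp ℂ 2 P) :
    (fun ω => ⟪f' ω, T f ω⟫) =ᵐ[P] fun ω => f ω * conj (f' ω) * g ω := by
  filter_upwards [hT f] with ω hTf
  rw [RCLike.inner_apply, hTf]
  ring

theorem integrable_mul_conj (hT : IsMultiplicationOperator T g) (f f' : Lp ℂ 2 P) :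
    Integrable (fun ω => f ω * conj (f' ω) * g ω) P :=
  (L2.integrable_inner f' (T f)).congr (hT.inner_apply_ae_eq f f')

theorem inner_apply (hT : IsMultiplicationOperator T g) (f f' : Lp ℂ 2 P) :
    ⟪f', T f⟫ = ∫ ω, f ω * conj (f' ω) * g ω ∂P := by
  rw [L2.inner_def]
  exact integral_congr_ae (hT.inner_apply_ae_eq f f')

theorem eq_adjoint (hT : IsMultiplicationOperator T g)
    (hS : IsMultiplicationOperator S fun ω => conj (g ω)) : T = ContinuousLinearMap.adjoint S := by
  refine (ContinuousLinearMap.eq_adjoint_iff T S).2 fun f f' => ?_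
  rw [L2.inner_def, L2.inner_def]
  refine integral_congr_ae ?_
  filter_upwards [hT f, hS f'] with ω hTf hSf'
  simp only [RCLike.inner_apply, hTf, hSf', map_mul]
  ring

end IsMultiplicationOperator

theorem IsPosDefKernel.sum_inner_multiplicationOperator_nonneg {𝒳 : Type*} {k : 𝒳 → 𝒳 → ℂ}
    (hk : IsPosDefKernel k) {n : ℕ} (X : Fin n → Ω → 𝒳)
    {T : Fin n → Fin n → Lp ℂ 2 P →L[ℂ] Lp ℂ 2 P}
    (hT : ∀ i j, IsMultiplicationOperator (T i j) fun ω => k (X i ω) (X j ω))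
    (f : Fin n → Lp ℂ 2 P) :
    0 ≤ ∑ i, ∑ j, ⟪f j, T i j (f i)⟫ := by
  have hint i j := (hT i j).integrable_mul_conj (f i) (f j)
  calc 0 ≤ ∫ ω, ∑ i, ∑ j, f i ω * conj (f j ω) * k (X i ω) (X j ω) ∂P :=
        integral_nonneg fun ω => hk.2 n (X · ω) (f · ω)
    _ = ∑ i, ∑ j, ⟪f j, T i j (f i)⟫ := by
        rw [integral_finsetSum _ fun i _ => integrable_finsetSum _ fun j _ => hint i j]
        simp only [integral_finsetSum _ fun j _ => hint _ j, (hT _ _).inner_apply]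

end

theorem statement12_general
    {𝒳 : Type*} [MeasurableSpace 𝒳]
    (k : 𝒳 → 𝒳 → ℂ)
    (hpd : IsPosDefKernel k)
    (hbdd : ∃ C : ℝ, ∀ x y, ‖k x y‖ ≤ C)
    {Ω : Type*} [MeasurableSpace Ω] (P : Measure Ω) [IsProbabilityMeasure P]
    (K : (Ω → 𝒳) → (Ω → 𝒳) → (Lp ℂ 2 P →L[ℂ] Lp ℂ 2 P))
    (hK : ∀ (X Y : Ω → 𝒳), Measurable X → Measurable Y → ∀ f : Lp ℂ 2 P,
      (K X Y f : Ω → ℂ) =ᵐ[P] fun ω => k (X ω) (Y ω) * f ω) :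
    (∀ (X Y : Ω → 𝒳), Measurable X → Measurable Y →
      ‖K X Y‖ ≤ essSup (fun ω => ‖k (X ω) (Y ω)‖) P ∧
      essSup (fun ω => ‖k (X ω) (Y ω)‖) P
        ≤ ⨆ p : 𝒳 × 𝒳, ‖k p.1 p.2‖) ∧
    (∀ (X Y : Ω → 𝒳), Measurable X → Measurable Y →
      K X Y = ContinuousLinearMap.adjoint (K Y X)) ∧
    (∀ (n : ℕ) (X : Fin n → Ω → 𝒳), (∀ i, Measurable (X i)) →
      ∀ f : Fin n → Lp ℂ 2 P,
        0 ≤ ∑ i, ∑ j, ⟪f j, (K (X i) (X j)) (f i)⟫) := by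
  have hmul : ∀ X Y : Ω → 𝒳, Measurable X → Measurable Y →
      IsMultiplicationOperator (K X Y) fun ω => k (X ω) (Y ω) := hK
  obtain ⟨C, hC⟩ := hbdd
  have hnorm_bdd : BddAbove (range fun p : 𝒳 × 𝒳 => ‖k p.1 p.2‖) :=
    ⟨C, forall_mem_range.2 fun p => hC p.1 p.2⟩
  refine ⟨fun X Y hX hY => ⟨?_, ?_⟩, fun X Y hX hY => ?_, fun n X hX f => ?_⟩
  · exact (hmul X Y hX hY).opNorm_le_essSup (isBoundedUnder_of ⟨C, fun ω => hC _ _⟩)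
  · exact essSup_comp_le_iSup ⟨0, forall_mem_range.2 fun _ => norm_nonneg _⟩ hnorm_bdd
      fun ω => (X ω, Y ω)
  · have hsymm : (fun ω => k (Y ω) (X ω)) = fun ω => conj (k (X ω) (Y ω)) :=
      funext fun ω => hpd.1 (Y ω) (X ω)
    exact (hmul X Y hX hY).eq_adjoint (hsymm ▸ hmul Y X hY hX)
  · exact hpd.sum_inner_multiplicationOperator_nonneg X (fun i j => hmul _ _ (hX i) (hX j)) f

/-- Let `k` be a bounded continuous positive definite kernel on a
topological space `𝒳` with its Borel σ-algebra, and `(Ω,P)` a probability space.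
For measurable `X, Y : Ω → 𝒳`, let `𝐊(X,Y)` be the operator on `L²(Ω,P)` given by
`(𝐊(X,Y) f)(ω) = k(X ω, Y ω) f(ω)` (here hypothesized as a family of bounded
operators acting in this way a.e.).  Then:
(a) `‖𝐊(X,Y)‖ ≤ ess sup_ω |k(X ω, Y ω)| ≤ sup_{x,y} |k(x,y)|`, and
(b) `𝐊` is a `B(L²(Ω,P))`-valued positive definite kernel on the set of measurable
maps `Ω → 𝒳`: `𝐊(X,Y) = 𝐊(Y,X)^*` and all Gram sums
`∑_{i,j} ⟨𝐊(X_i,X_j) f_i, f_j⟩` are nonnegative. -/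
theorem statement12
    {𝒳 : Type*} [TopologicalSpace 𝒳] [MeasurableSpace 𝒳] [OpensMeasurableSpace 𝒳]
    (k : 𝒳 → 𝒳 → ℂ)
    (hpd : IsPosDefKernel k)
    (hbdd : ∃ C : ℝ, ∀ x y, ‖k x y‖ ≤ C)
    (hcont : Continuous fun p : 𝒳 × 𝒳 => k p.1 p.2)
    {Ω : Type*} [MeasurableSpace Ω] (P : Measure Ω) [IsProbabilityMeasure P]
    (K : (Ω → 𝒳) → (Ω → 𝒳) → (Lp ℂ 2 P →L[ℂ] Lp ℂ 2 P))
    (hK : ∀ (X Y : Ω → 𝒳), Measurable X → Measurable Y → ∀ f : Lp ℂ 2 P,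
      (K X Y f : Ω → ℂ) =ᵐ[P] fun ω => k (X ω) (Y ω) * f ω) :
    (∀ (X Y : Ω → 𝒳), Measurable X → Measurable Y →
      ‖K X Y‖ ≤ essSup (fun ω => ‖k (X ω) (Y ω)‖) P ∧
      essSup (fun ω => ‖k (X ω) (Y ω)‖) P
        ≤ ⨆ p : 𝒳 × 𝒳, ‖k p.1 p.2‖) ∧
    (∀ (X Y : Ω → 𝒳), Measurable X → Measurable Y →
      K X Y = ContinuousLinearMap.adjoint (K Y X)) ∧
    (∀ (n : ℕ) (X : Fin n → Ω → 𝒳), (∀ i, Measurable (X i)) →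
      ∀ f : Fin n → Lp ℂ 2 P,
        0 ≤ ∑ i, ∑ j, ⟪f j, (K (X i) (X j)) (f i)⟫) :=
  statement12_general k hpd hbdd P K hK
end
end

section
/- Let 𝒳 be a topological space with its Borel σ-algebra, k a bounded continuous positive definite kernel on 𝒳 with RKHS H_k, (Ω,P) a probability space, 𝐤 the B(L²(Ω,P))-valued positive definite kernel on M(Ω,𝒳) given by (𝐤(X,Y)f)(ω) := k(X(ω),Y(ω))f(ω), with vvRKHS H_𝐤, and 𝟏 ∈ L²(Ω,P) the constant function 1. Then: (a) the assignment k_x ↦ 𝐤_x 𝟏 (x ∈ 𝒳, viewed as a constant random variable) extends uniquely to an isometric linear embedding ι: H_k → H_𝐤, and for every h ∈ H_k and X ∈ M(Ω,𝒳), ι(h)(X) = h ∘ X as an element of L²(Ω,P); and (b) the adjoint ι^*: H_𝐤 → H_k satisfies (ι^* g)(x) = ∫_Ω g(x)(ω) dP(ω) for every g ∈ H_𝐤 and x ∈ 𝒳 (where x is regarded as a constant random variable so that g(x) ∈ L²(Ω,P)); in particular, for X ∈ M(Ω,𝒳) and v ∈ L²(Ω,P), ι^*(𝐤_X v)(x)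 = ∫_Ω k(X(ω), x) v(ω) dP(ω). -/
/-! The Gram matrices of `x ↦ k_x` in `H_k` and of `x ↦ 𝐤_x 𝟏` in `H_𝐤` coincide, because
`⟪𝐤_x 𝟏, 𝐤_y 𝟏⟫ = ∫ k(y, x) dP = k(y, x)`; hence `k_x ↦ 𝐤_x 𝟏` extends from the dense span of the
`k_x` to a unique linear isometry `ι`. Part (b) is the reproducing property:
`(ι^* g)(x) = ⟪ι k_x, g⟫ = ⟪𝐤_x 𝟏, g⟫ = ⟪𝟏, g(x)⟫_{L²}`. For the evaluation formula, `h ↦ ι(h)(X)`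
is continuous into `L²` and `h ↦ h ∘ X` is pointwise continuous, and the two agree at every `k_x`;
since `L²`-convergence implies a.e. convergence of a subsequence, the set where they agree a.e. is
a closed subspace, hence everything. -/

open MeasureTheory
open scoped ComplexOrder BigOperators

noncomputable section

local notation "⟪" x ", " y "⟫" => @inner ℂ _ _ x y

open scoped InnerProductSpace ENNReal

section GramMatrix

open Finsupp

variable {ι 𝕜 E F : Type*} [RCLike 𝕜] [NormedAddCommGroup E] [InnerProductSpace 𝕜 E]
  [NormedAddCommGroup F] [InnerProductSpace 𝕜 F] {v : ι → E} {w : ι → F}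

theorem Finsupp.inner_linearCombination_eq_of_inner_eq_s16 (h : ∀ i j, ⟪v i, v j⟫_𝕜 = ⟪w i, w j⟫_𝕜)
    (c d : ι →₀ 𝕜) :
    ⟪linearCombination 𝕜 v c, linearCombination 𝕜 v d⟫_𝕜 =
      ⟪linearCombination 𝕜 w c, linearCombination 𝕜 w d⟫_𝕜 := by
  simp [linearCombination_apply, Finsupp.sum_inner, Finsupp.inner_sum, inner_smul_left,
    inner_smul_right, h]

theorem Finsupp.norm_linearCombination_eq_of_inner_eq_s16 (h : ∀ i j, ⟪v i, v j⟫_𝕜 = ⟪w i, w j⟫_𝕜)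
    (c : ι →₀ 𝕜) : ‖linearCombination 𝕜 v c‖ = ‖linearCombination 𝕜 w c‖ := by
  rw [norm_eq_sqrt_re_inner (𝕜 := 𝕜), norm_eq_sqrt_re_inner (𝕜 := 𝕜),
    inner_linearCombination_eq_of_inner_eq_s16 h]

theorem exists_unique_linearIsometry_of_inner_eq [CompleteSpace F]
    (hv : (Submodule.span 𝕜 (Set.range v)).topologicalClosure = ⊤)
    (h : ∀ i j, ⟪v i, v j⟫_𝕜 = ⟪w i, w j⟫_𝕜) :
    ∃! T : E →ₗᵢ[𝕜] F, ∀ i, T (v i) = w i := by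
  have hdense : DenseRange (linearCombination 𝕜 v) := by
    rw [DenseRange, ← LinearMap.coe_range, range_linearCombination]
    exact Submodule.dense_iff_topologicalClosure_eq_top.2 hv
  have hnorm := norm_linearCombination_eq_of_inner_eq_s16 h
  set T := (linearCombination 𝕜 w).extendOfNorm (linearCombination 𝕜 v)
  have hT : ∀ c, T (linearCombination 𝕜 v c) = linearCombination 𝕜 w c :=
    LinearMap.extendOfNorm_eq hdense ⟨1, fun c => by rw [hnorm, one_mul]⟩
  have hisom : ∀ x, ‖T x‖ = ‖x‖ := fun x =>
    hdense.induction_on x (isClosed_eq (by fun_prop) (by fun_prop)) fun c => by rw [hT, hnorm]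
  refine ⟨⟨T.toLinearMap, hisom⟩, fun i => by simpa using hT (single i 1), fun S hS => ?_⟩
  refine LinearIsometry.toContinuousLinearMap_injective
    (ContinuousLinearMap.ext_on (Submodule.dense_iff_topologicalClosure_eq_top.2 hv) ?_)
  rintro _ ⟨i, rfl⟩
  simpa [hS] using (hT (single i 1)).symm

end GramMatrix

section AEEqOfDense

variable {Ω E F : Type*} [MeasurableSpace Ω] {μ : Measure Ω} {p : ℝ≥0∞} [Fact (1 ≤ p)]
  [NormedAddCommGroup F]

theorem isClosed_setOf_coeFn_ae_eq [TopologicalSpace E] [SequentialSpace E] {T : E → Lp F p μ}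
    (hT : Continuous T) {e : Ω → E → F} (he : ∀ ω, Continuous (e ω)) :
    IsClosed {x | T x =ᵐ[μ] fun ω => e ω x} := by
  refine IsSeqClosed.isClosed fun xs x hxs hlim => ?_
  obtain ⟨ns, hns, hae⟩ :=
    (tendstoInMeasure_of_tendsto_Lp ((hT.tendsto x).comp hlim)).exists_seq_tendsto_ae
  filter_upwards [hae, ae_all_iff.2 hxs] with ω hω hωs
  refine tendsto_nhds_unique hω ?_
  simp only [Function.comp_apply, hωs]
  exact ((he ω).tendsto x).comp (hlim.comp hns.tendsto_atTop)

theorem coeFn_ae_eq_of_dense_span {𝕜 ι : Type*} [NormedField 𝕜] [NormedSpace 𝕜 F]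
    [NormedAddCommGroup E] [NormedSpace 𝕜 E] {v : ι → E}
    (hv : (Submodule.span 𝕜 (Set.range v)).topologicalClosure = ⊤)
    (T : E →L[𝕜] Lp F p μ) (e : Ω → E →L[𝕜] F) (hTv : ∀ i, T (v i) =ᵐ[μ] fun ω => e ω (v i))
    (x : E) : T x =ᵐ[μ] fun ω => e ω x := by
  let S : Submodule 𝕜 E :=
    { carrier := {x | T x =ᵐ[μ] fun ω => e ω x}
      zero_mem' := by
        show _ =ᵐ[μ] _
        simp only [map_zero]
        exact Lp.coeFn_zero F p μ
      add_mem' := fun {x y} (hx : _ =ᵐ[μ] _) (hy : _ =ᵐ[μ] _) => show _ =ᵐ[μ] _ by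
        filter_upwards [Lp.coeFn_add (T x) (T y), hx, hy] with ω h hx hy
        rw [map_add, h, Pi.add_apply, hx, hy, map_add]
      smul_mem' := fun c x (hx : _ =ᵐ[μ] _) => show _ =ᵐ[μ] _ by
        filter_upwards [Lp.coeFn_smul c (T x), hx] with ω h hx
        rw [map_smul, h, Pi.smul_apply, hx, map_smul] }
  have hle : (Submodule.span 𝕜 (Set.range v)).topologicalClosure ≤ S :=
    Submodule.topologicalClosure_minimal _ (Submodule.span_le.2 (Set.range_subset_iff.2 hTv))
      (isClosed_setOf_coeFn_ae_eq T.continuous fun ω => (e ω).continuous)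
  exact hle (hv ▸ Submodule.mem_top : x ∈ _)

end AEEqOfDense

theorem inner_eq_integral_of_coeFn_ae_eq_one {𝕜 Ω : Type*} [RCLike 𝕜] [MeasurableSpace Ω]
    {μ : Measure Ω} {one : Lp 𝕜 2 μ} (hone : (one : Ω → 𝕜) =ᵐ[μ] fun _ => 1) (f : Lp 𝕜 2 μ) :
    ⟪one, f⟫_𝕜 = ∫ ω, f ω ∂μ := by
  rw [L2.inner_def]
  refine integral_congr_ae ?_
  filter_upwards [hone] with ω hω
  simp [hω]

theorem statement16_general
    {𝒳 : Type*} [MeasurableSpace 𝒳]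
    (k : 𝒳 → 𝒳 → ℂ)
    {Ω : Type*} [MeasurableSpace Ω] (P : Measure Ω) [IsProbabilityMeasure P]
    -- the RKHS `H_k`
    {Hk : Type*} [NormedAddCommGroup Hk] [InnerProductSpace ℂ Hk] [CompleteSpace Hk]
    (φ : 𝒳 → Hk) (hφ : ∀ x y, ⟪φ x, φ y⟫ = k y x)
    (hφdense : (Submodule.span ℂ (Set.range φ)).topologicalClosure = ⊤)
    (evk : Hk → 𝒳 → ℂ) (hevk : ∀ (f : Hk) (a : 𝒳), evk f a = ⟪φ a, f⟫)
    -- the vvRKHS `H_𝐤`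
    {HK : Type*} [NormedAddCommGroup HK] [InnerProductSpace ℂ HK] [CompleteSpace HK]
    (feat : (Ω → 𝒳) → (Lp ℂ 2 P →L[ℂ] HK))
    (evK : HK → (Ω → 𝒳) → Lp ℂ 2 P)
    (hrep : ∀ (Y : Ω → 𝒳), Measurable Y → ∀ (f : Lp ℂ 2 P) (h : HK),
      ⟪feat Y f, h⟫ = ⟪f, evK h Y⟫)
    (hfeatval : ∀ (X Y : Ω → 𝒳), Measurable X → Measurable Y → ∀ f : Lp ℂ 2 P,
      (evK (feat Y f) X : Ω → ℂ) =ᵐ[P] fun ω => k (Y ω) (X ω) * f ω)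
    -- the constant function `𝟏`
    (one : Lp ℂ 2 P) (hone : (one : Ω → ℂ) =ᵐ[P] fun _ => (1 : ℂ)) :
    -- (a) existence and uniqueness of the isometric embedding
    (∃! ι : Hk →ₗᵢ[ℂ] HK, ∀ x : 𝒳, ι (φ x) = feat (fun _ => x) one) ∧
    -- and its properties
    (∀ ι : Hk →ₗᵢ[ℂ] HK, (∀ x : 𝒳, ι (φ x) = feat (fun _ => x) one) →
      -- `ι(h)(X) = h ∘ X`
      ((∀ (h : Hk) (X : Ω → 𝒳), Measurable X →
        (evK (ι h) X : Ω → ℂ) =ᵐ[P] fun ω => evk h (X ω)) ∧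
      -- (b) `(ι^* g)(x) = E_P[g(x)]`
      (∀ (g : HK) (x : 𝒳),
        evk ((ContinuousLinearMap.adjoint ι.toContinuousLinearMap) g) x
          = ∫ ω, (evK g (fun _ => x) : Ω → ℂ) ω ∂P) ∧
      -- in particular `ι^*(𝐤_X v)(x) = ∫ k(X ω, x) v(ω) dP(ω)`
      (∀ (X : Ω → 𝒳), Measurable X → ∀ (f : Lp ℂ 2 P) (x : 𝒳),
        evk ((ContinuousLinearMap.adjoint ι.toContinuousLinearMap) (feat X f)) x
          = ∫ ω, k (X ω) x * f ω ∂P))) := by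
  set Φ : 𝒳 → HK := fun x => feat (fun _ => x) one
  have hinnerΦ : ∀ x g, ⟪Φ x, g⟫ = ∫ ω, (evK g (fun _ => x) : Ω → ℂ) ω ∂P := fun x g => by
    rw [hrep _ measurable_const, inner_eq_integral_of_coeFn_ae_eq_one hone]
  have hgram : ∀ x y, ⟪φ x, φ y⟫ = ⟪Φ x, Φ y⟫ := fun x y => by
    have hΦ : (evK (Φ y) (fun _ => x) : Ω → ℂ) =ᵐ[P] fun _ => k y x := by
      filter_upwards [hfeatval _ _ measurable_const measurable_const one, hone] with ω h h1
      rw [h, h1, mul_one]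
    rw [hinnerΦ, integral_congr_ae hΦ, integral_const, probReal_univ, one_smul, hφ]
  have hevK : ∀ Y, Measurable Y → ∀ g, evK g Y = ContinuousLinearMap.adjoint (feat Y) g :=
    fun Y hY g => ext_inner_left ℂ fun f => by
      rw [← hrep Y hY, ContinuousLinearMap.adjoint_inner_right]
  refine ⟨exists_unique_linearIsometry_of_inner_eq hφdense hgram, fun ι hι => ?_⟩
  have hadj : ∀ g x, evk (ContinuousLinearMap.adjoint ι.toContinuousLinearMap g) x
      = ∫ ω, (evK g (fun _ => x) : Ω → ℂ) ω ∂P := fun g x => by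
    rw [hevk, ContinuousLinearMap.adjoint_inner_right, LinearIsometry.coe_toContinuousLinearMap,
      hι, hinnerΦ]
  refine ⟨fun h X hX => ?_, hadj, fun X hX f x =>
    (hadj _ x).trans (integral_congr_ae (hfeatval _ X measurable_const hX f))⟩
  simp only [hevk, hevK X hX]
  refine coeFn_ae_eq_of_dense_span hφdense
    ((ContinuousLinearMap.adjoint (feat X)).comp ι.toContinuousLinearMap)
    (fun ω => innerSL ℂ (φ (X ω))) (fun y => ?_) h
  filter_upwards [hfeatval X (fun _ => y) hX measurable_const one, hone] with ω h h1
  rw [ContinuousLinearMap.comp_apply, LinearIsometry.coe_toContinuousLinearMap, hι, ← hevK X hX,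
    h, h1, mul_one, innerSL_apply_apply, hφ]

/-- Let `k` be a bounded continuous positive definite kernel on `𝒳`
with RKHS `H_k` (modeled by a feature map `φ : 𝒳 → Hk`, `x ↦ k_x`, with dense span
and evaluation `evk`), `(Ω,P)` a probability space, and `H_𝐤` the vvRKHS of the
operator-valued kernel `(𝐤(X,Y)f)(ω) = k(X ω, Y ω) f(ω)` on `M(Ω,𝒳)` (modeled by
feature operators `feat Y : L²(Ω,P) → H_𝐤` with evaluation `evK` satisfying the
reproducing identities).  Let `𝟏 ∈ L²(Ω,P)` be the constant function `1`.  Then: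
(a) `k_x ↦ 𝐤_x 𝟏` extends uniquely to a linear isometric embedding `ι : H_k → H_𝐤`,
and `ι(h)(X) = h ∘ X` in `L²(Ω,P)` for all `h ∈ H_k` and measurable `X`; and
(b) the adjoint satisfies `(ι^* g)(x) = ∫ g(x)(ω) dP(ω)`; in particular
`ι^*(𝐤_X v)(x) = ∫ k(X ω, x) v(ω) dP(ω)`. -/
theorem statement16
    {𝒳 : Type*} [TopologicalSpace 𝒳] [MeasurableSpace 𝒳] [OpensMeasurableSpace 𝒳]
    (k : 𝒳 → 𝒳 → ℂ)
    (hpd : IsPosDefKernel k)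
    (hbdd : ∃ C : ℝ, ∀ x y, ‖k x y‖ ≤ C)
    (hcont : Continuous fun p : 𝒳 × 𝒳 => k p.1 p.2)
    {Ω : Type*} [MeasurableSpace Ω] (P : Measure Ω) [IsProbabilityMeasure P]
    -- the RKHS `H_k`
    {Hk : Type*} [NormedAddCommGroup Hk] [InnerProductSpace ℂ Hk] [CompleteSpace Hk]
    (φ : 𝒳 → Hk) (hφ : ∀ x y, ⟪φ x, φ y⟫ = k y x)
    (hφdense : (Submodule.span ℂ (Set.range φ)).topologicalClosure = ⊤)
    (evk : Hk → 𝒳 → ℂ) (hevk : ∀ (f : Hk) (a : 𝒳), evk f a = ⟪φ a, f⟫)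
    -- the vvRKHS `H_𝐤`
    {HK : Type*} [NormedAddCommGroup HK] [InnerProductSpace ℂ HK] [CompleteSpace HK]
    (feat : (Ω → 𝒳) → (Lp ℂ 2 P →L[ℂ] HK))
    (evK : HK → (Ω → 𝒳) → Lp ℂ 2 P)
    (hrep : ∀ (Y : Ω → 𝒳), Measurable Y → ∀ (f : Lp ℂ 2 P) (h : HK),
      ⟪feat Y f, h⟫ = ⟪f, evK h Y⟫)
    (hfeatval : ∀ (X Y : Ω → 𝒳), Measurable X → Measurable Y → ∀ f : Lp ℂ 2 P,
      (evK (feat Y f) X : Ω → ℂ) =ᵐ[P] fun ω => k (Y ω) (X ω) * f ω)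
    -- the constant function `𝟏`
    (one : Lp ℂ 2 P) (hone : (one : Ω → ℂ) =ᵐ[P] fun _ => (1 : ℂ)) :
    -- (a) existence and uniqueness of the isometric embedding
    (∃! ι : Hk →ₗᵢ[ℂ] HK, ∀ x : 𝒳, ι (φ x) = feat (fun _ => x) one) ∧
    -- and its properties
    (∀ ι : Hk →ₗᵢ[ℂ] HK, (∀ x : 𝒳, ι (φ x) = feat (fun _ => x) one) →
      -- `ι(h)(X) = h ∘ X`
      ((∀ (h : Hk) (X : Ω → 𝒳), Measurable X →
        (evK (ι h) X : Ω → ℂ) =ᵐ[P] fun ω => evk h (X ω)) ∧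
      -- (b) `(ι^* g)(x) = E_P[g(x)]`
      (∀ (g : HK) (x : 𝒳),
        evk ((ContinuousLinearMap.adjoint ι.toContinuousLinearMap) g) x
          = ∫ ω, (evK g (fun _ => x) : Ω → ℂ) ω ∂P) ∧
      -- in particular `ι^*(𝐤_X v)(x) = ∫ k(X ω, x) v(ω) dP(ω)`
      (∀ (X : Ω → 𝒳), Measurable X → ∀ (f : Lp ℂ 2 P) (x : 𝒳),
        evk ((ContinuousLinearMap.adjoint ι.toContinuousLinearMap) (feat X f)) x
          = ∫ ω, k (X ω) x * f ω ∂P))) :=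
  statement16_general k P φ hφ hφdense evk hevk feat evK hrep hfeatval one hone
end
end

section
/- Let V be a complex Hilbert space, 𝒳 a set, 𝐤: 𝒳×𝒳 → B(V) a B(V)-valued positive definite kernel with vvRKHS H_𝐤, and f: 𝒳 → 𝒳 a map. Assume that the Perron–Frobenius operator K_f, defined on the dense domain span{𝐤_x v : x ∈ 𝒳, v ∈ V} by K_f(∑_i 𝐤_{x_i} v_i) := ∑_i 𝐤_{f(x_i)} v_i, is a well-defined linear operator on H_𝐤. Let 𝒦_𝐤 be the Koopman (composition) operator on H_𝐤 with domain 𝒟(𝒦_𝐤) := {h ∈ H_𝐤 : h ∘ f ∈ H_𝐤} and 𝒦_𝐤 h := h ∘ f. Then the adjoint of K_f equals 𝒦_𝐤 as unbounded operators: 𝒟((K_f)^*) = 𝒟(𝒦_𝐤) and (K_f)^* h = h ∘ f for every h ∈ 𝒟(𝒦_𝐤). -/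
/-! Both sides are determined by inner products against the feature vectors `feat x v`:
by the reproducing property `⟪g, feat x v⟫ = ⟪ev g x, v⟫`, and `⟪h, K_f (feat x v)⟫ =
⟪h, feat (f x) v⟫ = ⟪ev h (f x), v⟫`. Since the feature vectors span the domain of `K_f`,
`(h, g)` lies in the graph of `K_f^*` exactly when these agree for all `x, v`, that is,
when `ev g = ev h ∘ f`. -/

open scoped ComplexOrder

local notation "⟪" x ", " y "⟫" => @inner ℂ _ _ x y

namespace LinearPMap

variable {𝕜 E F : Type*} [RCLike 𝕜] [NormedAddCommGroup E] [InnerProductSpace 𝕜 E]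
  [NormedAddCommGroup F] [InnerProductSpace 𝕜 F] {T : E →ₗ.[𝕜] F} {S : Set E}

theorem inner_eq_inner_apply_of_domain_eq_span (hS : T.domain = Submodule.span 𝕜 S) {g : E}
    {h : F} (hgh : ∀ s : T.domain, (s : E) ∈ S → inner 𝕜 g (s : E) = inner 𝕜 h (T s))
    (u : T.domain) : inner 𝕜 g (u : E) = inner 𝕜 h (T u) := by
  obtain ⟨u, hu⟩ := u
  have hu_span : u ∈ Submodule.span 𝕜 S := hS ▸ hu
  induction hu_span using Submodule.span_induction with
  | mem s hs => exact hgh ⟨s, hu⟩ hs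
  | zero =>
    rw [show (⟨0, hu⟩ : T.domain) = 0 from rfl, map_zero, ZeroMemClass.coe_zero,
      inner_zero_right, inner_zero_right]
  | add a b ha hb iha ihb =>
    have haT : a ∈ T.domain := hS ▸ ha
    have hbT : b ∈ T.domain := hS ▸ hb
    rw [show (⟨a + b, hu⟩ : T.domain) = ⟨a, haT⟩ + ⟨b, hbT⟩ from rfl, map_add,
      Submodule.coe_add, inner_add_right, inner_add_right, iha haT, ihb hbT]
  | smul c a ha iha =>
    have haT : a ∈ T.domain := hS ▸ ha
    rw [show (⟨c • a, hu⟩ : T.domain) = c • ⟨a, haT⟩ from rfl, map_smul,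
      Submodule.coe_smul, inner_smul_right, inner_smul_right, iha haT]

theorem mem_adjoint_graph_iff_of_domain_eq_span [CompleteSpace E] (hT : Dense (T.domain : Set E))
    (hS : T.domain = Submodule.span 𝕜 S) {h : F} {g : E} :
    (h, g) ∈ T.adjoint.graph ↔
      ∀ s : T.domain, (s : E) ∈ S → inner 𝕜 g (s : E) = inner 𝕜 h (T s) := by
  constructor
  · rintro hgraph s -
    obtain ⟨y, rfl, rfl⟩ := (mem_graph_iff _).1 hgraph
    exact adjoint_isFormalAdjoint hT y s
  · intro hgh
    have hinner := inner_eq_inner_apply_of_domain_eq_span hS hgh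
    have hdom : h ∈ T.adjoint.domain := mem_adjoint_domain_of_exists h ⟨g, hinner⟩
    exact (mem_graph_iff _).2 ⟨⟨h, hdom⟩, rfl, adjoint_apply_eq hT _ hinner⟩

end LinearPMap

section Reproducing

variable {𝕜 V HK 𝒳 : Type*} [RCLike 𝕜] [NormedAddCommGroup V] [InnerProductSpace 𝕜 V]
  [NormedAddCommGroup HK] [InnerProductSpace 𝕜 HK] {feat : 𝒳 → V → HK} {ev : HK → 𝒳 → V}

theorem inner_feat_right_of_reproducing
    (hrep : ∀ x v h, inner 𝕜 (feat x v) h = inner 𝕜 v (ev h x)) (h : HK) (x : 𝒳) (v : V) :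
    inner 𝕜 h (feat x v) = inner 𝕜 (ev h x) v := by
  rw [← inner_conj_symm, hrep, inner_conj_symm]

theorem ev_eq_ev_iff_of_reproducing
    (hrep : ∀ x v h, inner 𝕜 (feat x v) h = inner 𝕜 v (ev h x)) {g h : HK} {x y : 𝒳} :
    ev g x = ev h y ↔ ∀ v, inner 𝕜 g (feat x v) = inner 𝕜 h (feat y v) := by
  simp only [inner_feat_right_of_reproducing hrep]
  exact ⟨fun hxy v => by rw [hxy], ext_inner_right 𝕜⟩

end Reproducing

theorem statement18_general
    {V : Type*} [NormedAddCommGroup V] [InnerProductSpace ℂ V]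
    {𝒳 : Type*}
    -- the vvRKHS `H_𝐤`, with feature maps, evaluation, and reproducing property
    {HK : Type*} [NormedAddCommGroup HK] [InnerProductSpace ℂ HK] [CompleteSpace HK]
    (feat : 𝒳 → V →L[ℂ] HK)
    (ev : HK →ₗ[ℂ] (𝒳 → V))
    (hrep : ∀ (x : 𝒳) (v : V) (h : HK), ⟪feat x v, h⟫ = ⟪v, ev h x⟫)
    (f : 𝒳 → 𝒳)
    -- the Perron–Frobenius operator `K_f`, assumed well defined
    (Kf : HK →ₗ.[ℂ] HK)
    (hKdom : Kf.domain = Submodule.span ℂ {g : HK | ∃ (x : 𝒳) (v : V), g = feat x v})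
    (hKval : ∀ (x : 𝒳) (v : V) (hm : feat x v ∈ Kf.domain),
      Kf ⟨feat x v, hm⟩ = feat (f x) v)
    (hdense : Dense (Kf.domain : Set HK)) :
    -- the adjoint of `K_f` is the Koopman operator `h ↦ h ∘ f`
    (∀ h : HK,
      h ∈ Kf.adjoint.domain ↔ ∃ g : HK, ev g = fun x => ev h (f x)) ∧
    (∀ (h : HK) (hm : h ∈ Kf.adjoint.domain),
      ev (Kf.adjoint ⟨h, hm⟩) = fun x => ev h (f x)) := by
  have hfeat_mem : ∀ x v, feat x v ∈ Kf.domain := fun x v =>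
    hKdom ▸ Submodule.subset_span ⟨x, v, rfl⟩
  have hgraph : ∀ h g, (h, g) ∈ Kf.adjoint.graph ↔ ev g = fun x => ev h (f x) := by
    intro h g
    rw [LinearPMap.mem_adjoint_graph_iff_of_domain_eq_span hdense hKdom, funext_iff]
    simp only [ev_eq_ev_iff_of_reproducing hrep]
    constructor
    · intro hgh x v
      rw [hgh ⟨_, hfeat_mem x v⟩ ⟨x, v, rfl⟩, hKval]
    · rintro hgh ⟨_, -⟩ ⟨x, v, rfl⟩
      rw [hKval]
      exact hgh x v
  refine ⟨fun h => ?_, fun h hm => (hgraph _ _).1 (Kf.adjoint.mem_graph ⟨h, hm⟩)⟩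
  simp only [LinearPMap.mem_domain_iff, hgraph]

/-- Let `𝐤 : 𝒳×𝒳 → B(V)` be a `B(V)`-valued positive definite kernel
with vvRKHS `H_𝐤` (modeled by feature maps `feat`, an evaluation `ev`, and the
reproducing identity `⟨𝐤_x v, h⟩ = ⟨v, h(x)⟩`), and `f : 𝒳 → 𝒳` a map.  Assume the
Perron–Frobenius operator `K_f` — the densely defined operator with domain
`span{𝐤_x v}` determined by `K_f(𝐤_x v) = 𝐤_{f(x)} v` — is well defined (given here
as a `LinearPMap`).  Then the adjoint of `K_f` is the Koopman operator: its domain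
is `{h ∈ H_𝐤 : h ∘ f ∈ H_𝐤}` and `(K_f)^* h = h ∘ f` there. -/
theorem statement18
    {V : Type*} [NormedAddCommGroup V] [InnerProductSpace ℂ V] [CompleteSpace V]
    {𝒳 : Type*} (K : 𝒳 → 𝒳 → (V →L[ℂ] V))
    (hherm : ∀ x y, K x y = ContinuousLinearMap.adjoint (K y x))
    (hpos : ∀ (n : ℕ) (x : Fin n → 𝒳) (v : Fin n → V),
      0 ≤ ∑ i, ∑ j, ⟪v j, (K (x i) (x j)) (v i)⟫)
    -- the vvRKHS `H_𝐤`, with feature maps, evaluation, and reproducing property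
    {HK : Type*} [NormedAddCommGroup HK] [InnerProductSpace ℂ HK] [CompleteSpace HK]
    (feat : 𝒳 → V →L[ℂ] HK)
    (ev : HK →ₗ[ℂ] (𝒳 → V))
    (hrep : ∀ (x : 𝒳) (v : V) (h : HK), ⟪feat x v, h⟫ = ⟪v, ev h x⟫)
    (hfeatval : ∀ (y : 𝒳) (w : V), ev (feat y w) = fun x => (K y x) w)
    (f : 𝒳 → 𝒳)
    -- the Perron–Frobenius operator `K_f`, assumed well defined
    (Kf : HK →ₗ.[ℂ] HK)
    (hKdom : Kf.domain = Submodule.span ℂ {g : HK | ∃ (x : 𝒳) (v : V), g = feat x v})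
    (hKval : ∀ (x : 𝒳) (v : V) (hm : feat x v ∈ Kf.domain),
      Kf ⟨feat x v, hm⟩ = feat (f x) v)
    (hdense : Dense (Kf.domain : Set HK)) :
    -- the adjoint of `K_f` is the Koopman operator `h ↦ h ∘ f`
    (∀ h : HK,
      h ∈ Kf.adjoint.domain ↔ ∃ g : HK, ev g = fun x => ev h (f x)) ∧
    (∀ (h : HK) (hm : h ∈ Kf.adjoint.domain),
      ev (Kf.adjoint ⟨h, hm⟩) = fun x => ev h (f x)) :=
  statement18_general feat ev hrep f Kf hKdom hKval hdense
end
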